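/- (Bound on the final increment in Threshold Expansion.) Let P be a finite set of paths, x, s, s* impact vectors with d_{x+s*}(p) ≥ T for all p ∈ P, and set s° = s* \ s. Let ϵ ∈ [0,1), v a vertex and x̂ > 0, and suppose that for every vertex u with s°_u > 0: r_{P,x+s,v}(x̂)/x̂ ≥ (1−ϵ) · r_{P,x+s,u}(s°_u)/s°_u. If moreover there exists p ∈ P with d_{x+s}(p) < T, then x̂ ≤ ‖s*‖/(1−ϵ). -/
import Mathlib


/-- The capped length of a path `p` under impact vector `x`:
`d_x(p) = min(∑_{v ∈ p} f_v(x_v), T)`. -/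
noncomputable def dLen {V : Type*} (f : V → ℝ → ℝ) (T : ℝ) (x : V → ℝ) (p : List V) : ℝ :=
  min ((p.map (fun v => f v (x v))).sum) T

/-- `r_{P,w,v}(a) = ∑_{p∈P} (d_{w+⟨v,a⟩}(p) − d_w(p))`. -/
noncomputable def rGain {V : Type*} [DecidableEq V] (f : V → ℝ → ℝ) (T : ℝ)
    (P : Finset (List V)) (w : V → ℝ) (v : V) (a : ℝ) : ℝ :=
  ∑ p ∈ P, (dLen f T (w + Pi.single v a) p - dLen f T w p)

lemma min_subadd (S T a b : ℝ) (ha : 0 ≤ a) (hb : 0 ≤ b) :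
    min (S + (a + b)) T - min S T
      ≤ (min (S + a) T - min S T) + (min (S + b) T - min S T) := by
  simp only [min_def]; split_ifs <;> linarith

lemma finset_min_subadd {ι : Type*} (T S : ℝ) (t : Finset ι) (g : ι → ℝ)
    (hg : ∀ i ∈ t, 0 ≤ g i) :
    min (S + ∑ i ∈ t, g i) T - min S T ≤ ∑ i ∈ t, (min (S + g i) T - min S T) := by
  classical
  induction t using Finset.induction with
  | empty => simp
  | @insert a t ha ih =>
    rw [Finset.sum_insert ha, Finset.sum_insert ha]
    have h1 : 0 ≤ g a := hg a (Finset.mem_insert_self a t)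
    have h2 : 0 ≤ ∑ i ∈ t, g i :=
      Finset.sum_nonneg fun i hi => hg i (Finset.mem_insert_of_mem hi)
    have := min_subadd S T (g a) (∑ i ∈ t, g i) h1 h2
    have := ih (fun i hi => hg i (Finset.mem_insert_of_mem hi))
    linarith

/-- `dLen` as a finset sum, for nodup paths. -/
lemma dLen_eq_finset {V : Type*} [DecidableEq V] (f : V → ℝ → ℝ) (T : ℝ)
    (x : V → ℝ) (p : List V) (hp : p.Nodup) :
    dLen f T x p = min (∑ u ∈ p.toFinset, f u (x u)) T := by
  rw [dLen, List.sum_toFinset _ hp]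

lemma dLen_mono {V : Type*} (f : V → ℝ → ℝ)
    (hf : ∀ v, MonotoneOn (f v) (Set.Ici 0)) (T : ℝ)
    (w w' : V → ℝ) (hw : ∀ u, 0 ≤ w u) (hww' : ∀ u, w u ≤ w' u) (p : List V) :
    dLen f T w p ≤ dLen f T w' p := by
  apply min_le_min _ le_rfl
  apply List.sum_le_sum
  intro u _
  exact hf u (hw u) (le_trans (hw u) (hww' u)) (hww' u)

lemma dLen_le_T {V : Type*} (f : V → ℝ → ℝ) (T : ℝ) (w : V → ℝ) (p : List V) :
    dLen f T w p ≤ T := min_le_right _ _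

/-- Subadditivity of the capped gain over coordinates. -/
lemma dLen_step {V : Type*} [Fintype V] [DecidableEq V]
    (f : V → ℝ → ℝ) (T : ℝ)
    (hf : ∀ v, MonotoneOn (f v) (Set.Ici 0))
    (w δ : V → ℝ) (hw : ∀ u, 0 ≤ w u) (hδ : ∀ u, 0 ≤ δ u)
    (p : List V) (hp : p.Nodup) :
    dLen f T (w + δ) p - dLen f T w p
      ≤ ∑ u : V, (dLen f T (w + Pi.single u (δ u)) p - dLen f T w p) := by
  classical
  set t := p.toFinset with ht
  set g : V → ℝ := fun u => f u (w u + δ u) - f u (w u) with hg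
  have hgnn : ∀ u, 0 ≤ g u := by
    intro u
    have : f u (w u) ≤ f u (w u + δ u) :=
      hf u (hw u) (by simpa using add_nonneg (hw u) (hδ u)) (by linarith [hδ u])
    simp [hg]; linarith
  set S : ℝ := ∑ u ∈ t, f u (w u) with hS
  have key : ∀ u ∈ t, dLen f T (w + Pi.single u (δ u)) p = min (S + g u) T := by
    intro u hu
    rw [dLen_eq_finset f T _ p hp]
    congr 1
    have h1 : ∀ u' ∈ t.erase u,
        f u' (((w + Pi.single u (δ u)) : V → ℝ) u') = f u' (w u') := by
      intro u' hu'
      have hne : u' ≠ u := Finset.ne_of_mem_erase hu'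
      simp [Pi.single_eq_of_ne hne]
    have h2 : ∑ x ∈ t.erase u, f x (((w + Pi.single u (δ u)) : V → ℝ) x)
        = ∑ x ∈ t.erase u, f x (w x) := Finset.sum_congr rfl h1
    have h3 : S = f u (w u) + ∑ x ∈ t.erase u, f x (w x) :=
      (Finset.add_sum_erase t (fun x => f x (w x)) hu).symm
    rw [← Finset.add_sum_erase _ _ hu, h2, h3]
    have h4 : ((w + Pi.single u (δ u)) : V → ℝ) u = w u + δ u := by simp
    rw [h4]
    simp only [hg]
    ring
  have hwd : dLen f T (w + δ) p = min (S + ∑ u ∈ t, g u) T := by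
    rw [dLen_eq_finset f T _ p hp]
    congr 1
    rw [hS, ← Finset.sum_add_distrib]
    apply Finset.sum_congr rfl
    intro u _
    simp only [hg, Pi.add_apply]
    ring
  have hwe : dLen f T w p = min S T := dLen_eq_finset f T w p hp
  have main : dLen f T (w + δ) p - dLen f T w p
      ≤ ∑ u ∈ t, (dLen f T (w + Pi.single u (δ u)) p - dLen f T w p) := by
    calc dLen f T (w + δ) p - dLen f T w p
        = min (S + ∑ u ∈ t, g u) T - min S T := by rw [hwd, hwe]
      _ ≤ ∑ u ∈ t, (min (S + g u) T - min S T) :=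
          finset_min_subadd T S t g (fun u _ => hgnn u)
      _ = ∑ u ∈ t, (dLen f T (w + Pi.single u (δ u)) p - dLen f T w p) :=
          Finset.sum_congr rfl (fun u hu => by rw [key u hu, hwe])
  refine le_trans main (Finset.sum_le_sum_of_subset_of_nonneg (Finset.subset_univ t) ?_)
  intro u _ _
  have : dLen f T w p ≤ dLen f T (w + Pi.single u (δ u)) p := by
    apply dLen_mono f hf T w _ hw
    intro u'
    rcases eq_or_ne u' u with rfl | hne
    · simp [hδ u']
    · simp [Pi.single_eq_of_ne hne]
  linarith

set_option maxHeartbeats 2000000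

/-- bound on the final increment in Threshold Expansion:
under the greedy invariant, if some path of `P` still has length `< T`
under `x + s`, then `x̂ ≤ ‖s*‖/(1−ϵ)`. -/
theorem stmt6 {V : Type*} [Fintype V] [DecidableEq V]
    (f : V → ℝ → ℝ) (T : ℝ) (hT : 0 < T)
    (hf : ∀ v, MonotoneOn (f v) (Set.Ici 0))
    (hf0 : ∀ v y, 0 ≤ y → 0 ≤ f v y)
    (P : Finset (List V)) (hP : ∀ p ∈ P, p.Nodup)
    (x s sStar : V → ℝ)
    (hx : ∀ u, 0 ≤ x u) (hs : ∀ u, 0 ≤ s u) (hsStar : ∀ u, 0 ≤ sStar u)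
    (hopt : ∀ p ∈ P, T ≤ dLen f T (x + sStar) p)
    (sCirc : V → ℝ) (hsCirc : ∀ u, sCirc u = max (sStar u - s u) 0)
    (ϵ : ℝ) (hϵ0 : 0 ≤ ϵ) (hϵ1 : ϵ < 1)
    (v : V) (xhat : ℝ) (hxhat : 0 < xhat)
    (hgreedy : ∀ u, 0 < sCirc u →
      (1 - ϵ) * (rGain f T P (x + s) u (sCirc u) / sCirc u)
        ≤ rGain f T P (x + s) v xhat / xhat)
    (hex : ∃ p ∈ P, dLen f T (x + s) p < T) :
    xhat ≤ (∑ u : V, sStar u) / (1 - ϵ) := by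
  classical
  set w : V → ℝ := x + s with hw
  have hwnn : ∀ u, 0 ≤ w u := fun u => add_nonneg (hx u) (hs u)
  have hsCnn : ∀ u, 0 ≤ sCirc u := fun u => (hsCirc u) ▸ le_max_right _ _
  set D : ℝ := ∑ p ∈ P, (T - dLen f T w p) with hD
  set R : ℝ := rGain f T P w v xhat with hR
  have h1ϵ : (0:ℝ) < 1 - ϵ := by linarith
  -- D > 0
  have hDpos : 0 < D := by
    obtain ⟨p₀, hp₀P, hp₀⟩ := hex
    rw [hD]
    refine Finset.sum_pos' (fun p _ => by linarith [dLen_le_T f T w p]) ?_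
    exact ⟨p₀, hp₀P, by linarith⟩
  -- w + sCirc reaches T on every path of P
  have hfull : ∀ p ∈ P, dLen f T (w + sCirc) p = T := by
    intro p hpP
    have h1 : T ≤ (p.map (fun u => f u ((x + sStar) u))).sum := by
      have := hopt p hpP
      rw [dLen] at this
      exact le_trans this (min_le_left _ _)
    have h2 : (p.map (fun u => f u ((x + sStar) u))).sum
        ≤ (p.map (fun u => f u ((w + sCirc) u))).sum := by
      apply List.sum_le_sum
      intro u _
      have hle : (x + sStar) u ≤ (w + sCirc) u := by
        simp only [hw, Pi.add_apply, hsCirc u]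
        rcases le_total (sStar u - s u) 0 with h | h
        · rw [max_eq_right h]; linarith
        · rw [max_eq_left h]; linarith
      exact hf u (by simpa using add_nonneg (hx u) (hsStar u))
        (le_trans (by simpa using add_nonneg (hx u) (hsStar u)) hle) hle
    rw [dLen]
    exact min_eq_right (by linarith)
  -- D ≤ ∑_u rGain u (sCirc u)
  have hDle : D ≤ ∑ u : V, rGain f T P w u (sCirc u) := by
    have step : ∀ p ∈ P, T - dLen f T w p
        ≤ ∑ u : V, (dLen f T (w + Pi.single u (sCirc u)) p - dLen f T w p) := by
      intro p hpP
      have := dLen_step f T hf w sCirc hwnn hsCnn p (hP p hpP)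
      rw [hfull p hpP] at this
      exact this
    rw [hD]
    calc ∑ p ∈ P, (T - dLen f T w p)
        ≤ ∑ p ∈ P, ∑ u : V,
          (dLen f T (w + Pi.single u (sCirc u)) p - dLen f T w p) :=
          Finset.sum_le_sum step
      _ = ∑ u : V, rGain f T P w u (sCirc u) := by
          rw [Finset.sum_comm]
          simp only [rGain]
  -- greedy bound on each rGain u
  set Q : ℝ := R / xhat / (1 - ϵ) with hQ
  have hGQ : ∀ u : V, rGain f T P w u (sCirc u) ≤ sCirc u * Q := by
    intro u
    rcases lt_or_eq_of_le (hsCnn u) with hc | hc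
    · have hgr := hgreedy u hc
      have h3 : rGain f T P w u (sCirc u) / sCirc u ≤ Q := by
        rw [hQ, le_div_iff₀ h1ϵ]
        linarith [hgr]
      calc rGain f T P w u (sCirc u)
          = sCirc u * (rGain f T P w u (sCirc u) / sCirc u) := by
            field_simp
        _ ≤ sCirc u * Q := by
            exact mul_le_mul_of_nonneg_left h3 (le_of_lt hc)
    · rw [← hc]
      simp [rGain, Pi.single_zero]
  -- R ≤ D
  have hRD : R ≤ D := by
    rw [hR, hD, rGain]
    apply Finset.sum_le_sum
    intro p _
    linarith [dLen_le_T f T (w + Pi.single v xhat) p]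
  set A : ℝ := ∑ u : V, sCirc u with hA
  have hAnn : 0 ≤ A := Finset.sum_nonneg fun u _ => hsCnn u
  have hDQ : D ≤ A * Q := by
    calc D ≤ ∑ u : V, rGain f T P w u (sCirc u) := hDle
      _ ≤ ∑ u : V, sCirc u * Q := Finset.sum_le_sum fun u _ => hGQ u
      _ = A * Q := by rw [hA, Finset.sum_mul]
  -- conclude (1-ϵ) * xhat ≤ A
  have hQR : Q * (xhat * (1 - ϵ)) = R := by
    rw [hQ]; field_simp
  have hkey : (1 - ϵ) * xhat ≤ A := by
    nlinarith [mul_le_mul_of_nonneg_left hRD hAnn, hDQ, hDpos,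
      mul_pos hxhat h1ϵ]
  have hAsS : A ≤ ∑ u : V, sStar u := by
    apply Finset.sum_le_sum
    intro u _
    rw [hsCirc u]
    rcases le_total (sStar u - s u) 0 with h | h
    · rw [max_eq_right h]; exact hsStar u
    · rw [max_eq_left h]; linarith [hs u]
  rw [le_div_iff₀ h1ϵ]
  nlinarith
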